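/- arXiv:1310.5315 — 3 statements merged into one kernel-verified Lean document; each statement's English description precedes it below -/
import Mathlib

section
/- Let a, b ∈ ℂ with a ≠ 0 and b ≠ 0. Then the polynomial X²·Y² + a·X + b·Y is irreducible in ℂ[X, Y]. -/
/-!
Read `X²Y² + aX + bY` as the quadratic `X²·Y² + b·Y + aX` in `Y` over `K[X]`. It is primitive
since its `Y`-coefficient `b` is a unit, so by Gauss's lemma it suffices to show that it has no root
in `K(X)`. A root would make the discriminant `b² - 4aX³` a square in `K(X)`, which is impossible
because the discriminant has odd degree.
-/

section

open Polynomial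
open scoped Polynomial.Bivariate

theorem map_discrim {R S : Type*} [Ring R] [Ring S] (f : R →+* S) (a b c : R) :
    f (discrim a b c) = discrim (f a) (f b) (f c) := by
  simp [discrim, map_ofNat]

theorem Polynomial.isPrimitive_of_isUnit_coeff {R : Type*} [CommSemiring R] {p : R[X]} {n : ℕ}
    (h : IsUnit (p.coeff n)) : p.IsPrimitive :=
  fun r hr => isUnit_of_dvd_unit ((C_dvd_iff_dvd_coeff r p).mp hr n) h

theorem Polynomial.irreducible_of_not_isSquare_discrim {F : Type*} [Field F] {a b c : F}
    (ha : a ≠ 0) (h : ¬IsSquare (discrim a b c)) :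
    Irreducible (C a * X ^ 2 + C b * X + C c) := by
  refine irreducible_of_degree_le_three_of_not_isRoot (by simp [natDegree_quadratic ha])
    fun x hx => h ⟨2 * a * x + b, ?_⟩
  rw [discrim_eq_sq_of_quadratic_eq_zero (x := x) (by simpa [sq] using hx), sq]

theorem Polynomial.IsPrimitive.irreducible_of_not_isSquare_discrim {R K : Type*} [CommRing R]
    [IsDomain R] [IsGCDMonoid R] [Field K] [Algebra R K] [IsFractionRing R K] {a b c : R}
    (hp : (C a * X ^ 2 + C b * X + C c).IsPrimitive) (ha : a ≠ 0)
    (h : ¬IsSquare (algebraMap R K (discrim a b c))) :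
    Irreducible (C a * X ^ 2 + C b * X + C c) := by
  rw [hp.irreducible_iff_irreducible_map_fraction_map (K := K)]
  simp only [Polynomial.map_add, Polynomial.map_mul, Polynomial.map_pow, map_C, map_X]
  refine Polynomial.irreducible_of_not_isSquare_discrim ?_ (by rwa [← map_discrim])
  exact (map_ne_zero_iff _ (IsFractionRing.injective R K)).mpr ha

theorem RatFunc.not_isSquare_algebraMap_of_odd_natDegree {K : Type*} [Field K] {p : K[X]}
    (hp : Odd p.natDegree) : ¬IsSquare (algebraMap K[X] (RatFunc K) p) := by
  rintro ⟨r, hr⟩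
  have hr0 : r ≠ 0 := by
    rintro rfl
    rw [mul_zero, map_eq_zero_iff _ (IsFractionRing.injective K[X] (RatFunc K))] at hr
    simp [hr] at hp
  have hdeg := congrArg intDegree hr
  rw [intDegree_polynomial, intDegree_mul hr0 hr0] at hdeg
  obtain ⟨k, hk⟩ := hp
  omega

theorem Polynomial.Bivariate.irreducible_C_X_sq_mul_Y_sq_add {K : Type*} [Field K]
    [NeZero (2 : K)] {a b : K} (ha : a ≠ 0) (hb : b ≠ 0) :
    Irreducible (C (X ^ 2) * Y ^ 2 + C (C b) * Y + C (C a * X) : K[X][Y]) := by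
  refine IsPrimitive.irreducible_of_not_isSquare_discrim (K := RatFunc K)
    (isPrimitive_of_isUnit_coeff (n := 1) ?_) (pow_ne_zero 2 X_ne_zero)
    (RatFunc.not_isSquare_algebraMap_of_odd_natDegree ?_)
  · simp only [coeff_add, coeff_C_mul, coeff_X_pow, coeff_C, coeff_X_one]
    simpa using hb.isUnit
  · have hdisc : discrim (X ^ 2) (C b) (C a * X) = C (b ^ 2) - C (4 * a) * X ^ 3 := by
      simp only [discrim, map_pow, map_mul, map_ofNat]; ring
    have : natDegree (C (b ^ 2) - C (4 * a) * X ^ 3) = 3 := by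
      compute_degree!
      exact ⟨by simpa [show (4 : K) = 2 * 2 by norm_num] using NeZero.ne (2 : K), ha⟩
    rw [hdisc, this]; decide

end

theorem MvPolynomial.irreducible_X_zero_sq_mul_X_one_sq_add {K : Type*} [Field K]
    [NeZero (2 : K)] {a b : K} (ha : a ≠ 0) (hb : b ≠ 0) :
    Irreducible (X 0 ^ 2 * X 1 ^ 2 + C a * X 0 + C b * X 1 : MvPolynomial (Fin 2) K) := by
  have h := (MulEquiv.irreducible_iff (Polynomial.Bivariate.equivMvPolynomial K)).mpr
    (Polynomial.Bivariate.irreducible_C_X_sq_mul_Y_sq_add ha hb)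
  convert h using 1
  simp only [map_add, map_mul, map_pow, Polynomial.Bivariate.equivMvPolynomial_C_C,
    Polynomial.Bivariate.equivMvPolynomial_C_X, Polynomial.Bivariate.equivMvPolynomial_X]
  ring

open MvPolynomial in
theorem stmt9 (a b : ℂ) (ha : a ≠ 0) (hb : b ≠ 0) :
    Irreducible ((X 0)^2 * (X 1)^2 + C a * X 0 + C b * X 1 :
      MvPolynomial (Fin 2) ℂ) :=
  MvPolynomial.irreducible_X_zero_sq_mul_X_one_sq_add ha hb
end

section
/- Let α, β, γ ∈ ℂ be all nonzero. Then the ring ℂ[s0, s1, t] / (α·t + s0·s1, t² + β·s0 + γ·s1) is an integral domain; equivalently, the affine curve V(α·t + s0·s1, t² + β·s0 + γ·s1) ⊂ 𝔸³ is irreducible and reduced. -/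
/-!
Eliminating `t = -s₀s₁/α` identifies the ring with `K[s₀, s₁]/(s₀²s₁² + α²β s₀ + α²γ s₁)`.
Viewed as a quadratic in `s₀` over `K[s₁]`, this polynomial has a unit middle coefficient, so
it has no constant factor, and it has no root in `K[s₁]` by a degree count. In a factorization
into two linear factors the leading coefficients multiply to `s₁²`: either one of them is a unit,
which produces a root, or `s₁` divides both, and then `s₁` divides the middle coefficient `α²β`.
-/

theorem Ideal.eq_comap_of_leftInverse_mod {A B F G : Type*} [Ring A] [Semiring B]
    [FunLike F A B] [RingHomClass F A B] [FunLike G B A] [RingHomClass G B A]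
    {I : Ideal A} {J : Ideal B} {f : F} {g : G} (hf : I ≤ J.comap f) (hg : J ≤ I.comap g)
    (hgf : ∀ a, g (f a) - a ∈ I) : I = J.comap f :=
  le_antisymm hf fun a ha => by simpa using I.sub_mem (hg ha) (hgf a)

section PlaneCurve

open Polynomial

theorem Polynomial.exists_isRoot_of_dvd_of_natDegree_eq_one {R : Type*} [CommRing R]
    {p f : R[X]} (hp : p.natDegree = 1) (hu : IsUnit p.leadingCoeff) (hdvd : p ∣ f) :
    ∃ r, f.IsRoot r := by
  obtain ⟨q, rfl⟩ := hdvd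
  obtain ⟨u, hu⟩ := hu
  rw [leadingCoeff, hp] at hu
  refine ⟨-(↑u⁻¹ * p.coeff 0), ?_⟩
  rw [IsRoot, eval_mul, eq_X_add_C_of_natDegree_le_one hp.le, ← hu]
  simp

variable {K : Type*} [Field K] {a b : K}

/-- `Y²X² + aX + bY` in `K[Y][X]`, i.e. `s₀²s₁² + a s₀ + b s₁` with `X = s₀`, `Y = s₁`. -/
noncomputable def planeCurve (a b : K) : K[X][X] :=
  C (X ^ 2) * X ^ 2 + C (C a) * X + C (C b * X)

theorem coeff_planeCurve_one : (planeCurve a b).coeff 1 = C a := by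
  simp [planeCurve, coeff_C_mul, coeff_C, -map_pow]

theorem coeff_planeCurve_two : (planeCurve a b).coeff 2 = X ^ 2 := by
  simp [planeCurve, coeff_C_mul, -map_pow]

theorem natDegree_planeCurve : (planeCurve a b).natDegree = 2 := by
  unfold planeCurve; compute_degree!

theorem eval_planeCurve (r : K[X]) :
    (planeCurve a b).eval r = X ^ 2 * r ^ 2 + C a * r + C b * X := by
  simp [planeCurve]

theorem planeCurve_not_isRoot (hb : b ≠ 0) (r : K[X]) : ¬ (planeCurve a b).IsRoot r := by
  rw [IsRoot, eval_planeCurve]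
  intro h
  rcases eq_or_ne r 0 with rfl | hr
  · simp_all
  have hlow : (C a * r + C b * X).natDegree ≤ max r.natDegree 1 :=
    natDegree_add_le_of_degree_le ((natDegree_C_mul_le _ _).trans (le_max_left _ _))
      (((natDegree_C_mul_le _ _).trans natDegree_X_le).trans (le_max_right _ _))
  have htop : (X ^ 2 * r ^ 2 : K[X]).natDegree = 2 * r.natDegree + 2 := by
    rw [natDegree_mul (by simp) (pow_ne_zero 2 hr), natDegree_X_pow, natDegree_pow]; ring
  rw [add_assoc, add_eq_zero_iff_eq_neg] at h
  rw [h, natDegree_neg] at htop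
  omega

theorem isUnit_of_C_mul_eq_planeCurve (ha : a ≠ 0) {c : K[X]} {q : K[X][X]}
    (h : C c * q = planeCurve a b) : IsUnit c := by
  have h1 : c * q.coeff 1 = C a := by rw [← coeff_C_mul, h, coeff_planeCurve_one]
  exact isUnit_of_mul_isUnit_left (h1 ▸ isUnit_C.2 ha.isUnit)

theorem mul_ne_planeCurve_of_natDegree_eq_one (ha : a ≠ 0) (hb : b ≠ 0) {p q : K[X][X]}
    (hp : p.natDegree = 1) (hq : q.natDegree = 1) : p * q ≠ planeCurve a b := by
  intro h
  have hlead : p.leadingCoeff * q.leadingCoeff = 1 * X ^ 2 := by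
    rw [one_mul, ← leadingCoeff_mul, h, leadingCoeff, natDegree_planeCurve, coeff_planeCurve_two]
  obtain ⟨i, j, u, v, hij, huv, hpu, hqv⟩ := mul_eq_mul_prime_pow prime_X hlead
  have hu : IsUnit u := IsUnit.of_mul_eq_one _ huv.symm
  have hv : IsUnit v := IsUnit.of_mul_eq_one_right _ huv.symm
  obtain ⟨rfl, rfl⟩ | ⟨rfl, rfl⟩ | ⟨rfl, rfl⟩ :
      (i = 0 ∧ j = 2) ∨ (i = 1 ∧ j = 1) ∨ (i = 2 ∧ j = 0) := by omega
  · obtain ⟨r, hr⟩ := exists_isRoot_of_dvd_of_natDegree_eq_one hp (by simpa [hpu] using hu)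
      (h ▸ dvd_mul_right p q)
    exact planeCurve_not_isRoot hb r hr
  · have hXa : (X : K[X]) ∣ C a := by
      rw [← coeff_planeCurve_one, ← h, coeff_mul, Finset.Nat.sum_antidiagonal_succ,
        Finset.Nat.antidiagonal_zero, Finset.sum_singleton]
      rw [leadingCoeff, hp] at hpu
      rw [leadingCoeff, hq] at hqv
      rw [hpu, hqv, pow_one]
      exact dvd_add (dvd_mul_of_dvd_right (dvd_mul_left _ _) _)
        (dvd_mul_of_dvd_left (dvd_mul_left _ _) _)
    simp [X_dvd_iff, ha] at hXa
  · obtain ⟨r, hr⟩ := exists_isRoot_of_dvd_of_natDegree_eq_one hq (by simpa [hqv] using hv)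
      (h ▸ dvd_mul_left q p)
    exact planeCurve_not_isRoot hb r hr

theorem irreducible_planeCurve (ha : a ≠ 0) (hb : b ≠ 0) : Irreducible (planeCurve a b) := by
  refine ⟨fun hu => by simpa [natDegree_planeCurve] using natDegree_eq_zero_of_isUnit hu,
    fun p q h => ?_⟩
  have hp0 : p ≠ 0 := by rintro rfl; simpa [natDegree_planeCurve] using congrArg natDegree h
  have hq0 : q ≠ 0 := by rintro rfl; simpa [natDegree_planeCurve] using congrArg natDegree h
  have hdeg : p.natDegree + q.natDegree = 2 := by
    rw [← natDegree_mul hp0 hq0, ← h, natDegree_planeCurve]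
  obtain hp | ⟨hp, hq⟩ | hq :
      p.natDegree = 0 ∨ (p.natDegree = 1 ∧ q.natDegree = 1) ∨ q.natDegree = 0 := by omega
  · rw [eq_C_of_natDegree_eq_zero hp] at h ⊢
    exact .inl (isUnit_C.2 (isUnit_of_C_mul_eq_planeCurve ha h.symm))
  · exact absurd h.symm (mul_ne_planeCurve_of_natDegree_eq_one ha hb hp hq)
  · rw [eq_C_of_natDegree_eq_zero hq] at h ⊢
    rw [mul_comm] at h
    exact .inr (isUnit_C.2 (isUnit_of_C_mul_eq_planeCurve ha h.symm))

end PlaneCurve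

section Elimination

open MvPolynomial
open scoped Polynomial

variable {K : Type*} [Field K] {α β γ : K}

noncomputable def curveIdeal (α β γ : K) : Ideal (MvPolynomial (Fin 3) K) :=
  Ideal.span {C α * X 2 + X 0 * X 1, (X 2)^2 + C β * X 0 + C γ * X 1}

noncomputable def toPlane (α : K) : MvPolynomial (Fin 3) K →ₐ[K] K[X][X] :=
  aeval ![Polynomial.X, Polynomial.C Polynomial.X,
    -Polynomial.C (Polynomial.C α⁻¹) * (Polynomial.X * Polynomial.C Polynomial.X)]

noncomputable def ofPlane : K[X][X] →ₐ[K] MvPolynomial (Fin 3) K :=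
  Polynomial.aevalTower (Polynomial.aeval (X 1)) (X 0)

theorem curveIdeal_le_comap_toPlane (hα : α ≠ 0) :
    curveIdeal α β γ ≤ (Ideal.span {planeCurve (α ^ 2 * β) (α ^ 2 * γ)}).comap (toPlane α) := by
  rw [curveIdeal, Ideal.span_le]
  have hinv : (Polynomial.C (Polynomial.C α) * Polynomial.C (Polynomial.C α⁻¹) : K[X][X]) =
      1 := by
    rw [← map_mul, ← map_mul, mul_inv_cancel₀ hα, map_one, map_one]
  rintro _ (rfl | rfl) <;> simp only [SetLike.mem_coe, Ideal.mem_comap]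
  · have : toPlane α (C α * X 2 + X 0 * X 1) = 0 := by
      simp [toPlane]
      linear_combination (-(Polynomial.X * Polynomial.C Polynomial.X)) * hinv
    rw [this]; exact zero_mem _
  · have : toPlane α ((X 2)^2 + C β * X 0 + C γ * X 1) =
        Polynomial.C (Polynomial.C α⁻¹) ^ 2 * planeCurve (α ^ 2 * β) (α ^ 2 * γ) := by
      simp [toPlane, planeCurve]
      linear_combination (-(Polynomial.C (Polynomial.C β) * Polynomial.X +
        Polynomial.C (Polynomial.C γ) * Polynomial.C Polynomial.X) *
          (Polynomial.C (Polynomial.C α) * Polynomial.C (Polynomial.C α⁻¹) + 1)) * hinv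
    rw [this]; exact Ideal.mul_mem_left _ _ (Ideal.mem_span_singleton_self _)

theorem span_planeCurve_le_comap_ofPlane :
    Ideal.span {planeCurve (α ^ 2 * β) (α ^ 2 * γ)} ≤ (curveIdeal α β γ).comap ofPlane := by
  rw [Ideal.span_le, Set.singleton_subset_iff, SetLike.mem_coe, Ideal.mem_comap]
  have : ofPlane (planeCurve (α ^ 2 * β) (α ^ 2 * γ)) =
      (X 0 * X 1 - C α * X 2) * (C α * X 2 + X 0 * X 1) +
        C α ^ 2 * ((X 2)^2 + C β * X 0 + C γ * X 1) := by
    simp [ofPlane, planeCurve]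
    ring
  rw [this, curveIdeal]
  exact Ideal.add_mem _ (Ideal.mul_mem_left _ _ (Ideal.subset_span (by simp)))
    (Ideal.mul_mem_left _ _ (Ideal.subset_span (by simp)))

theorem ofPlane_toPlane_sub_mem (hα : α ≠ 0) (x : MvPolynomial (Fin 3) K) :
    ofPlane (toPlane α x) - x ∈ curveIdeal α β γ := by
  suffices h : (Ideal.Quotient.mkₐ K (curveIdeal α β γ)).comp (ofPlane.comp (toPlane α)) =
      Ideal.Quotient.mkₐ K (curveIdeal α β γ) by
    simpa [Ideal.Quotient.eq] using DFunLike.congr_fun h x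
  refine MvPolynomial.algHom_ext fun i => ?_
  fin_cases i
  · simp [toPlane, ofPlane]
  · simp [toPlane, ofPlane]
  · have hinv : (C α⁻¹ * C α : MvPolynomial (Fin 3) K) = 1 := by
      rw [← map_mul, inv_mul_cancel₀ hα, map_one]
    have : ofPlane (toPlane α (X 2)) - X 2 = -C α⁻¹ * (C α * X 2 + X 0 * X 1) := by
      simp [toPlane, ofPlane]
      linear_combination X 2 * hinv
    simp only [AlgHom.comp_apply, Ideal.Quotient.mkₐ_eq_mk, Ideal.Quotient.eq]
    show ofPlane (toPlane α (X 2)) - X 2 ∈ curveIdeal α β γ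
    rw [this, curveIdeal]
    exact Ideal.mul_mem_left _ _ (Ideal.subset_span (Set.mem_insert _ _))

theorem isPrime_curveIdeal (hα : α ≠ 0) (hβ : β ≠ 0) (hγ : γ ≠ 0) :
    (curveIdeal α β γ).IsPrime := by
  have hirr := irreducible_planeCurve (mul_ne_zero (pow_ne_zero 2 hα) hβ)
    (mul_ne_zero (pow_ne_zero 2 hα) hγ)
  have : (Ideal.span {planeCurve (α ^ 2 * β) (α ^ 2 * γ)}).IsPrime :=
    (Ideal.span_singleton_prime hirr.ne_zero).2 hirr.prime
  rw [Ideal.eq_comap_of_leftInverse_mod (curveIdeal_le_comap_toPlane hα)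
    span_planeCurve_le_comap_ofPlane (ofPlane_toPlane_sub_mem hα)]
  exact Ideal.comap_isPrime _ _

end Elimination

open MvPolynomial in
theorem stmt10 (α β γ : ℂ) (hα : α ≠ 0) (hβ : β ≠ 0) (hγ : γ ≠ 0) :
    IsDomain ((MvPolynomial (Fin 3) ℂ) ⧸
      Ideal.span {C α * X 2 + X 0 * X 1, (X 2)^2 + C β * X 0 + C γ * X 1}) :=
  have := isPrime_curveIdeal hα hβ hγ
  Ideal.Quotient.isDomain (curveIdeal α β γ)
end

section
/- Let λ be a ℚ-linear functional on a commutative ring with elements A, E satisfying λ(A⁵) = 1/540, λ(A^i·E^(5-i)) = 0 for i = 1, 2, 3, 4, and λ(E⁵) = 27/8. Then λ((A - (1/3)E)²·(A - (4/3)E)·(5A - (2/3)E)·(12A - E)) = 1/9 - 1/3 = -2/9 < 0. -/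
theorem stmt18 (R : Type*) [CommRing R] [Algebra ℚ R] (lam : R →ₗ[ℚ] ℚ)
    (A E : R) (h5 : lam (A^5) = 1/540)
    (hmix : ∀ i : ℕ, 1 ≤ i → i ≤ 4 → lam (A^i * E^(5 - i)) = 0)
    (h0 : lam (E^5) = 27/8) :
    lam ((A - ((1:ℚ)/3) • E)^2 * (A - ((4:ℚ)/3) • E)
        * ((5:R) * A - ((2:ℚ)/3) • E) * ((12:R) * A - E)) = 1/9 - 1/3 ∧
    ((1:ℚ)/9 - 1/3 = -2/9) ∧ (-(2:ℚ)/9 < 0) := by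
  refine ⟨?_, by norm_num, by norm_num⟩
  set u : R := algebraMap ℚ R (1/3) with hu_def
  have hu : (3:R) * u = 1 := by
    rw [hu_def, ← map_ofNat (algebraMap ℚ R) 3, ← map_mul]
    norm_num
  have hsm1 : ((1:ℚ)/3) • E = u * E := by rw [Algebra.smul_def]
  have hsm4 : ((4:ℚ)/3) • E = 4 * (u * E) := by
    rw [Algebra.smul_def, show (4/3:ℚ) = 4 * (1/3) by norm_num, map_mul,
      map_ofNat, mul_assoc]
  have hsm2 : ((2:ℚ)/3) • E = 2 * (u * E) := by
    rw [Algebra.smul_def, show (2/3:ℚ) = 2 * (1/3) by norm_num, map_mul,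
      map_ofNat, mul_assoc]
  have hX : (A - ((1:ℚ)/3) • E)^2 * (A - ((4:ℚ)/3) • E)
      * ((5:R) * A - ((2:ℚ)/3) • E) * ((12:R) * A - E)
      = ((1:ℚ)/81) • (((3:R)*A - E)^2 * ((3:R)*A - 4*E)
          * ((15:R)*A - 2*E) * ((12:R)*A - E)) := by
    rw [hsm1, hsm4, hsm2, Algebra.smul_def,
      show (1/81:ℚ) = (1/3)^4 by norm_num, map_pow, ← hu_def]
    linear_combination ((5:R)*A^4*E - 60*A^5 - 32*u*A^3*E^2 + 399*u*A^4*E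
      - 180*u*A^5 + 57*u^2*A^2*E^3 - 780*u^2*A^3*E^2 + 1197*u^2*A^4*E
      - 540*u^2*A^5 - 38*u^3*A*E^4 + 627*u^3*A^2*E^3 - 2340*u^3*A^3*E^2
      + 3591*u^3*A^4*E - 1620*u^3*A^5) * hu
  have hY : ((3:R)*A - E)^2 * ((3:R)*A - 4*E) * ((15:R)*A - 2*E) * ((12:R)*A - E)
      = (4860:ℚ) • A^5 - (10773:ℚ) • (A^4*E^1) + (7020:ℚ) • (A^3*E^2)
        - (1881:ℚ) • (A^2*E^3) + (210:ℚ) • (A^1*E^4) - (8:ℚ) • E^5 := by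
    simp only [Algebra.smul_def, map_ofNat]
    ring
  have m1 := hmix 1 (by norm_num) (by norm_num)
  have m2 := hmix 2 (by norm_num) (by norm_num)
  have m3 := hmix 3 (by norm_num) (by norm_num)
  have m4 := hmix 4 (by norm_num) (by norm_num)
  norm_num at m1 m2 m3 m4
  rw [hX, map_smul, hY]
  simp only [map_sub, map_add, map_smul, pow_one, h5, h0, m1, m2, m3, m4]
  norm_num
end
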